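/- (Compression Lemma) Let M be a model in a language with a linear ordering ≤ without a largest element, which satisfies the full collection scheme. Let φ(x,y) be a binary formula (possibly with parameters) and let a ∈ M. Suppose that there exist arbitrarily large y ∈ M such that for some x < a, φ(x,y) holds. Then there exists x₀ < a such that φ(x₀,y) holds for arbitrarily large y ∈ M. -/

import Mathlib

/-!
A self-contained framework for truth theories over Peano Arithmetic.

* `PATerm`, `PAFormula` : the syntax of the arithmetical language `L_PA`
  (variables are indexed by `ℕ`).
* `TFormula` : the syntax of `L_PA ∪ {T}` where `T` is a fresh unary predicate.
* `RFormula I` : the syntax of `L_PA` extended by unary relation symbols indexed by `I`.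
* `PAStruct M` : an `L_PA`-structure on `M`; `PASat`, `TSat`, `RSat` : Tarskian satisfaction.
* `IsPAModel s` : the axioms of `PA` (including the full induction scheme for `L_PA`).
* `Coding M` : an abstract presentation of the arithmetized syntax of `L_PA`
  inside a model `M` (codes of formulae, sentences, closed terms, numerals,
  substitution, assignments, syntactic similarity, depth, ...), axiomatized by
  its basic (PA-provably true) properties.
* `CTminus` : the compositional truth axioms `CT⁻`; `INT`/`IntColl` : internal
  induction/collection; satisfaction classes, syntactic regularity, etc.
-/

namespace CTPaper

/-! ### Syntax -/

inductive PATerm : Type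
  | var : ℕ → PATerm
  | zero : PATerm
  | succ : PATerm → PATerm
  | add : PATerm → PATerm → PATerm
  | mul : PATerm → PATerm → PATerm
  deriving DecidableEq

inductive PAFormula : Type
  | eq : PATerm → PATerm → PAFormula
  | le : PATerm → PATerm → PAFormula
  | not : PAFormula → PAFormula
  | and : PAFormula → PAFormula → PAFormula
  | or : PAFormula → PAFormula → PAFormula
  | ex : ℕ → PAFormula → PAFormula
  | all : ℕ → PAFormula → PAFormula
  deriving DecidableEq

/-- Formulas of `L_PA ∪ {T}` for a fresh unary predicate `T`. -/
inductive TFormula : Type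
  | eq : PATerm → PATerm → TFormula
  | le : PATerm → PATerm → TFormula
  | tr : PATerm → TFormula
  | not : TFormula → TFormula
  | and : TFormula → TFormula → TFormula
  | or : TFormula → TFormula → TFormula
  | ex : ℕ → TFormula → TFormula
  | all : ℕ → TFormula → TFormula
  deriving DecidableEq

/-- Formulas of `L_PA` extended by unary relation symbols indexed by `I`. -/
inductive RFormula (I : Type) : Type
  | eq : PATerm → PATerm → RFormula I
  | le : PATerm → PATerm → RFormula I
  | rel : I → PATerm → RFormula I
  | not : RFormula I → RFormula I
  | and : RFormula I → RFormula I → RFormula I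
  | or : RFormula I → RFormula I → RFormula I
  | ex : ℕ → RFormula I → RFormula I
  | all : ℕ → RFormula I → RFormula I

/-! ### Free variables -/

def fvTm : PATerm → Finset ℕ
  | .var n => {n}
  | .zero => ∅
  | .succ t => fvTm t
  | .add t u => fvTm t ∪ fvTm u
  | .mul t u => fvTm t ∪ fvTm u

def fvF : PAFormula → Finset ℕ
  | .eq t u => fvTm t ∪ fvTm u
  | .le t u => fvTm t ∪ fvTm u
  | .not φ => fvF φ
  | .and φ ψ => fvF φ ∪ fvF ψ
  | .or φ ψ => fvF φ ∪ fvF ψ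
  | .ex v φ => (fvF φ).erase v
  | .all v φ => (fvF φ).erase v

def fvTF : TFormula → Finset ℕ
  | .eq t u => fvTm t ∪ fvTm u
  | .le t u => fvTm t ∪ fvTm u
  | .tr t => fvTm t
  | .not φ => fvTF φ
  | .and φ ψ => fvTF φ ∪ fvTF ψ
  | .or φ ψ => fvTF φ ∪ fvTF ψ
  | .ex v φ => (fvTF φ).erase v
  | .all v φ => (fvTF φ).erase v

def fvR {I : Type} : RFormula I → Finset ℕ
  | .eq t u => fvTm t ∪ fvTm u
  | .le t u => fvTm t ∪ fvTm u
  | .rel _ t => fvTm t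
  | .not φ => fvR φ
  | .and φ ψ => fvR φ ∪ fvR ψ
  | .or φ ψ => fvR φ ∪ fvR ψ
  | .ex v φ => (fvR φ).erase v
  | .all v φ => (fvR φ).erase v

/-- The (finitely many) relation symbols occurring in a formula. -/
def relIdx : RFormula ℕ → Finset ℕ
  | .eq _ _ => ∅
  | .le _ _ => ∅
  | .rel i _ => {i}
  | .not φ => relIdx φ
  | .and φ ψ => relIdx φ ∪ relIdx ψ
  | .or φ ψ => relIdx φ ∪ relIdx ψ
  | .ex _ φ => relIdx φ
  | .all _ φ => relIdx φ

/-! ### Gödel numbering (used for recursiveness of types) -/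

def encTm : PATerm → ℕ
  | .var n => Nat.pair 0 n
  | .zero => Nat.pair 1 0
  | .succ t => Nat.pair 2 (encTm t)
  | .add t u => Nat.pair 3 (Nat.pair (encTm t) (encTm u))
  | .mul t u => Nat.pair 4 (Nat.pair (encTm t) (encTm u))

def encF : PAFormula → ℕ
  | .eq t u => Nat.pair 0 (Nat.pair (encTm t) (encTm u))
  | .le t u => Nat.pair 1 (Nat.pair (encTm t) (encTm u))
  | .not φ => Nat.pair 2 (encF φ)
  | .and φ ψ => Nat.pair 3 (Nat.pair (encF φ) (encF ψ))
  | .or φ ψ => Nat.pair 4 (Nat.pair (encF φ) (encF ψ))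
  | .ex v φ => Nat.pair 5 (Nat.pair v (encF φ))
  | .all v φ => Nat.pair 6 (Nat.pair v (encF φ))

def encTF : TFormula → ℕ
  | .eq t u => Nat.pair 0 (Nat.pair (encTm t) (encTm u))
  | .le t u => Nat.pair 1 (Nat.pair (encTm t) (encTm u))
  | .tr t => Nat.pair 2 (encTm t)
  | .not φ => Nat.pair 3 (encTF φ)
  | .and φ ψ => Nat.pair 4 (Nat.pair (encTF φ) (encTF ψ))
  | .or φ ψ => Nat.pair 5 (Nat.pair (encTF φ) (encTF ψ))
  | .ex v φ => Nat.pair 6 (Nat.pair v (encTF φ))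
  | .all v φ => Nat.pair 7 (Nat.pair v (encTF φ))

def encR : RFormula ℕ → ℕ
  | .eq t u => Nat.pair 0 (Nat.pair (encTm t) (encTm u))
  | .le t u => Nat.pair 1 (Nat.pair (encTm t) (encTm u))
  | .rel i t => Nat.pair 2 (Nat.pair i (encTm t))
  | .not φ => Nat.pair 3 (encR φ)
  | .and φ ψ => Nat.pair 4 (Nat.pair (encR φ) (encR ψ))
  | .or φ ψ => Nat.pair 5 (Nat.pair (encR φ) (encR ψ))
  | .ex v φ => Nat.pair 6 (Nat.pair v (encR φ))
  | .all v φ => Nat.pair 7 (Nat.pair v (encR φ))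

/-! ### Structures and satisfaction -/

/-- An `L_PA`-structure on `M`. -/
structure PAStruct (M : Type*) where
  zero : M
  succ : M → M
  add : M → M → M
  mul : M → M → M
  leR : M → M → Prop

variable {M M' : Type*}

def teval (s : PAStruct M) (ν : ℕ → M) : PATerm → M
  | .var n => ν n
  | .zero => s.zero
  | .succ t => s.succ (teval s ν t)
  | .add t u => s.add (teval s ν t) (teval s ν u)
  | .mul t u => s.mul (teval s ν t) (teval s ν u)

/-- The strict order associated with `leR`. -/
def ltR (s : PAStruct M) (x y : M) : Prop := s.leR x y ∧ x ≠ y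

def PASat (s : PAStruct M) : (ℕ → M) → PAFormula → Prop
  | ν, .eq t u => teval s ν t = teval s ν u
  | ν, .le t u => s.leR (teval s ν t) (teval s ν u)
  | ν, .not φ => ¬ PASat s ν φ
  | ν, .and φ ψ => PASat s ν φ ∧ PASat s ν ψ
  | ν, .or φ ψ => PASat s ν φ ∨ PASat s ν ψ
  | ν, .ex v φ => ∃ x : M, PASat s (Function.update ν v x) φ
  | ν, .all v φ => ∀ x : M, PASat s (Function.update ν v x) φ

def TSat (s : PAStruct M) (T : Set M) : (ℕ → M) → TFormula → Prop
  | ν, .eq t u => teval s ν t = teval s ν u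
  | ν, .le t u => s.leR (teval s ν t) (teval s ν u)
  | ν, .tr t => teval s ν t ∈ T
  | ν, .not φ => ¬ TSat s T ν φ
  | ν, .and φ ψ => TSat s T ν φ ∧ TSat s T ν ψ
  | ν, .or φ ψ => TSat s T ν φ ∨ TSat s T ν ψ
  | ν, .ex v φ => ∃ x : M, TSat s T (Function.update ν v x) φ
  | ν, .all v φ => ∀ x : M, TSat s T (Function.update ν v x) φ

def RSat {I : Type} (s : PAStruct M) (Q : I → M → Prop) : (ℕ → M) → RFormula I → Prop
  | ν, .eq t u => teval s ν t = teval s ν u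
  | ν, .le t u => s.leR (teval s ν t) (teval s ν u)
  | ν, .rel i t => Q i (teval s ν t)
  | ν, .not φ => ¬ RSat s Q ν φ
  | ν, .and φ ψ => RSat s Q ν φ ∧ RSat s Q ν ψ
  | ν, .or φ ψ => RSat s Q ν φ ∨ RSat s Q ν ψ
  | ν, .ex v φ => ∃ x : M, RSat s Q (Function.update ν v x) φ
  | ν, .all v φ => ∀ x : M, RSat s Q (Function.update ν v x) φ

/-- The axioms of Peano Arithmetic: the basic axioms together with the full
induction scheme for `L_PA` (with parameters). -/
def IsPAModel (s : PAStruct M) : Prop :=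
  (∀ x : M, s.succ x ≠ s.zero) ∧
  (∀ x y : M, s.succ x = s.succ y → x = y) ∧
  (∀ x : M, s.add x s.zero = x) ∧
  (∀ x y : M, s.add x (s.succ y) = s.succ (s.add x y)) ∧
  (∀ x : M, s.mul x s.zero = s.zero) ∧
  (∀ x y : M, s.mul x (s.succ y) = s.add (s.mul x y) x) ∧
  (∀ x y : M, s.leR x y ↔ ∃ d : M, s.add x d = y) ∧
  (∀ (φ : PAFormula) (ν : ℕ → M) (v : ℕ),
    PASat s (Function.update ν v s.zero) φ →
    (∀ x : M, PASat s (Function.update ν v x) φ →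
      PASat s (Function.update ν v (s.succ x)) φ) →
    ∀ x : M, PASat s (Function.update ν v x) φ)

/-- The full collection scheme for the language `L_PA ∪ {T}` (with parameters):
`∀x<a ∃y θ(x,y) → ∃b ∀x<a ∃y<b θ(x,y)`. -/
def TColl (s : PAStruct M) (T : Set M) : Prop :=
  ∀ (φ : TFormula) (ν : ℕ → M) (a : M),
    (∀ x : M, ltR s x a →
      ∃ y : M, TSat s T (Function.update (Function.update ν 0 x) 1 y) φ) →
    ∃ b : M, ∀ x : M, ltR s x a →
      ∃ y : M, ltR s y b ∧ TSat s T (Function.update (Function.update ν 0 x) 1 y) φ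

/-- The full collection scheme for `L_PA` extended by relation symbols. -/
def RColl {I : Type} (s : PAStruct M) (Q : I → M → Prop) : Prop :=
  ∀ (φ : RFormula I) (ν : ℕ → M) (a : M),
    (∀ x : M, ltR s x a →
      ∃ y : M, RSat s Q (Function.update (Function.update ν 0 x) 1 y) φ) →
    ∃ b : M, ∀ x : M, ltR s x a →
      ∃ y : M, ltR s y b ∧ RSat s Q (Function.update (Function.update ν 0 x) 1 y) φ

/-! ### Standard elements, cuts, ω₁-likeness -/

def ofNat (s : PAStruct M) : ℕ → M
  | 0 => s.zero
  | n + 1 => s.succ (ofNat s n)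

/-- `x` is a standard element of the model. -/
def Std (s : PAStruct M) (x : M) : Prop := ∃ n : ℕ, ofNat s n = x

/-- A cut: a nonempty proper initial segment closed under successor. -/
def IsCut (s : PAStruct M) (I : Set M) : Prop :=
  I.Nonempty ∧ (∀ x ∈ I, ∀ y : M, s.leR y x → y ∈ I) ∧
    (∀ x ∈ I, s.succ x ∈ I) ∧ I ≠ Set.univ

/-- A nonstandard cut: a cut containing nonstandard elements. -/
def NonstdCut (s : PAStruct M) (I : Set M) : Prop :=
  IsCut s I ∧ ∃ x ∈ I, ¬ Std s x

/-- `f` is (on `[0,a]`) a coded function of the model: its graph on `[0,a]` is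
defined by an `L_PA`-formula with parameters. -/
def CodedOn (s : PAStruct M) (a : M) (f : M → M) : Prop :=
  ∃ (φ : PAFormula) (ν : ℕ → M), ∀ x : M, s.leR x a → ∀ y : M,
    (f x = y ↔ PASat s (Function.update (Function.update ν 0 x) 1 y) φ)

/-- Local semiregularity of a cut `I` (Definition of the paper): for every
`a ∈ I` and every coded `f : [0,a] → M` there are a nonstandard `a' ≤ a` and
`b ∈ I` with `f[[0,a']] ∩ I ⊆ [0,b]`. -/
def LocSemireg (s : PAStruct M) (I : Set M) : Prop :=
  ∀ a ∈ I, ∀ f : M → M, CodedOn s a f →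
    ∃ a' : M, ¬ Std s a' ∧ s.leR a' a ∧
      ∃ b ∈ I, ∀ x : M, s.leR x a' → f x ∈ I → s.leR (f x) b

/-- `M` is `ω₁`-like: it has cardinality `ℵ₁` but all proper initial segments
are countable. -/
def Omega1Like (s : PAStruct M) : Prop :=
  Cardinal.mk M = Cardinal.aleph 1 ∧
  ∀ I : Set M, (∀ x ∈ I, ∀ y : M, s.leR y x → y ∈ I) → I ≠ Set.univ → I.Countable

/-! ### Embeddings, elementarity, end-extensions -/

/-- `h` is an embedding of `L_PA`-structures. -/
def IsEmb (s : PAStruct M) (s' : PAStruct M') (h : M → M') : Prop :=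
  Function.Injective h ∧ h s.zero = s'.zero ∧
  (∀ x, h (s.succ x) = s'.succ (h x)) ∧
  (∀ x y, h (s.add x y) = s'.add (h x) (h y)) ∧
  (∀ x y, h (s.mul x y) = s'.mul (h x) (h y)) ∧
  (∀ x y, s.leR x y ↔ s'.leR (h x) (h y))

/-- `h` is an end-extension: every new element lies above the whole image. -/
def IsEnd (s : PAStruct M) (s' : PAStruct M') (h : M → M') : Prop :=
  ∀ y : M', y ∉ Set.range h → ∀ x : M, ltR s' (h x) y

/-- `h` is an elementary map of `L_PA`-structures. -/
def Elementary (s : PAStruct M) (s' : PAStruct M') (h : M → M') : Prop :=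
  ∀ (φ : PAFormula) (ν : ℕ → M), PASat s ν φ ↔ PASat s' (fun n => h (ν n)) φ

/-- `h` is an elementary map of structures for `L_PA` with extra relations. -/
def RElementary {I : Type} (s : PAStruct M) (s' : PAStruct M')
    (Q : I → M → Prop) (Q' : I → M' → Prop) (h : M → M') : Prop :=
  ∀ (φ : RFormula I) (ν : ℕ → M), RSat s Q ν φ ↔ RSat s' Q' (fun n => h (ν n)) φ

/-- Elementary equivalence of two expansions `(M,A)`, `(M,A')` of the same model
by a unary predicate: the same sentences of `L_PA ∪ {T}` hold. -/
def PredElemEquiv (s : PAStruct M) (A A' : Set M) : Prop :=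
  ∀ φ : TFormula, fvTF φ = ∅ →
    ((∀ ν : ℕ → M, TSat s A ν φ) ↔ (∀ ν : ℕ → M, TSat s A' ν φ))

/-! ### Recursive saturation -/

/-- `M` is recursively saturated: every recursive type `p(v)` (in the variable `0`,
with finitely many parameter variables) which is finitely satisfiable is realized. -/
def RecSat (s : PAStruct M) : Prop :=
  ∀ p : Set PAFormula,
    ComputablePred (fun n : ℕ => ∃ φ ∈ p, encF φ = n) →
    (∃ N : ℕ, ∀ φ ∈ p, ∀ v ∈ fvF φ, v ≤ N) →
    ∀ ν : ℕ → M,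
      (∀ t : Finset PAFormula, ↑t ⊆ p →
        ∃ x : M, ∀ φ ∈ t, PASat s (Function.update ν 0 x) φ) →
      ∃ x : M, ∀ φ ∈ p, PASat s (Function.update ν 0 x) φ

/-- Recursive saturation of the expansion `(M, A)` by one unary predicate. -/
def RecSatT (s : PAStruct M) (A : Set M) : Prop :=
  ∀ p : Set TFormula,
    ComputablePred (fun n : ℕ => ∃ φ ∈ p, encTF φ = n) →
    (∃ N : ℕ, ∀ φ ∈ p, ∀ v ∈ fvTF φ, v ≤ N) →
    ∀ ν : ℕ → M,
      (∀ t : Finset TFormula, ↑t ⊆ p →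
        ∃ x : M, ∀ φ ∈ t, TSat s A (Function.update ν 0 x) φ) →
      ∃ x : M, ∀ φ ∈ p, TSat s A (Function.update ν 0 x) φ

/-- Recursive saturation of an expansion by `ℕ`-indexed unary predicates, for
types mentioning only finitely many of the predicate symbols. -/
def RecSatR (s : PAStruct M) (Q : ℕ → M → Prop) : Prop :=
  ∀ p : Set (RFormula ℕ),
    ComputablePred (fun n : ℕ => ∃ φ ∈ p, encR φ = n) →
    (∃ N : ℕ, ∀ φ ∈ p, ∀ v ∈ fvR φ, v ≤ N) →
    (∃ K : ℕ, ∀ φ ∈ p, ∀ i ∈ relIdx φ, i ≤ K) →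
    ∀ ν : ℕ → M,
      (∀ t : Finset (RFormula ℕ), ↑t ⊆ p →
        ∃ x : M, ∀ φ ∈ t, RSat s Q (Function.update ν 0 x) φ) →
      ∃ x : M, ∀ φ ∈ p, RSat s Q (Function.update ν 0 x) φ

/-- Piecewise recursive saturation of an expansion of `M` by unary predicates
indexed by `I`: every recursive type using only finitely many of the symbols
(and finitely many parameters) which is finitely satisfiable is realized. -/
def PiecewiseRecSat {I : Type} (s : PAStruct M) (Q : I → M → Prop) : Prop :=
  RecSat s ∧ ∀ g : ℕ → I, RecSatR s (fun n => Q (g n))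

/-! ### Internal (arithmetized) syntax -/

/-- An abstract presentation of the internal arithmetized syntax of `L_PA` in a
model `M`: codes of formulae, sentences, (closed) terms, variables, numerals,
substitution, assignments, depth, syntactic similarity, etc., together with
their basic properties.  `Form` is `Form_{L_PA}(M)`, `Form1`/`Form2` are the
formulae with at most one/two free variables, `num x` is the numeral of `x`,
`tval` the value of a closed term, `subst1 φ t` is `φ(t)`, `substSeq φ sSeq`
substitutes a coded sequence of closed terms, `Asn φ` is the set of
(codes of) `φ`-assignments, `substA φ α` is `φ[α]`, `tvalA t α` is `t^α`,
`AsnMod v α β` is `α ∼_v β`, `ASim φ α ψ β` is syntactic similarity of pairs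
`(φ,α) ∼ (ψ,β)`, `FSim` is similarity of formulas (equality of syntactic
templates) and `DirSub ψ φ` says `ψ` is a direct subformula of `φ`. -/
structure Coding (M : Type*) where
  Form : Set M
  Form1 : Set M
  Form2 : Set M
  Sent : Set M
  Term : Set M
  ClTerm : Set M
  Var : Set M
  tval : M → M
  ClTermSeq : Set M
  SeqValEq : M → M → Prop
  num : M → M
  eqC : M → M → M
  negC : M → M
  andC : M → M → M
  orC : M → M → M
  exC : M → M → M
  allC : M → M → M
  exCl : M → M
  subst1 : M → M → M
  subst2 : M → M → M → M
  substSeq : M → M → M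
  depth : M → M
  Asn : M → Set M
  emptyA : M
  asn1 : M → M → M
  asn2 : M → M → M → M
  AsnMod : M → M → M → Prop
  substA : M → M → M
  tvalA : M → M → M
  ASim : M → M → M → M → Prop
  FSim : M → M → Prop
  DirSub : M → M → Prop
  sent_form : Sent ⊆ Form
  form1_form : Form1 ⊆ Form
  form2_form : Form2 ⊆ Form
  sent_form1 : Sent ⊆ Form1
  clterm_term : ClTerm ⊆ Term
  num_clterm : ∀ x : M, num x ∈ ClTerm
  tval_num : ∀ x : M, tval (num x) = x
  eqC_sent : ∀ t ∈ ClTerm, ∀ u ∈ ClTerm, eqC t u ∈ Sent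
  negC_form : ∀ φ ∈ Form, negC φ ∈ Form
  negC_sent : ∀ φ ∈ Sent, negC φ ∈ Sent
  andC_form : ∀ φ ∈ Form, ∀ ψ ∈ Form, andC φ ψ ∈ Form
  andC_sent : ∀ φ ∈ Sent, ∀ ψ ∈ Sent, andC φ ψ ∈ Sent
  orC_form : ∀ φ ∈ Form, ∀ ψ ∈ Form, orC φ ψ ∈ Form
  orC_sent : ∀ φ ∈ Sent, ∀ ψ ∈ Sent, orC φ ψ ∈ Sent
  exC_form : ∀ v ∈ Var, ∀ φ ∈ Form, exC v φ ∈ Form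
  allC_form : ∀ v ∈ Var, ∀ φ ∈ Form, allC v φ ∈ Form
  exCl_sent : ∀ φ ∈ Form1, exCl φ ∈ Sent
  subst1_sent : ∀ φ ∈ Form1, ∀ t ∈ ClTerm, subst1 φ t ∈ Sent
  subst2_sent : ∀ φ ∈ Form2, ∀ t ∈ ClTerm, ∀ u ∈ ClTerm, subst2 φ t u ∈ Sent
  substSeq_sent : ∀ φ ∈ Form, ∀ q ∈ ClTermSeq, substSeq φ q ∈ Sent
  emptyA_asn : ∀ φ ∈ Sent, emptyA ∈ Asn φ
  substA_empty : ∀ φ ∈ Sent, substA φ emptyA = φ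
  substA_sent : ∀ φ ∈ Form, ∀ α ∈ Asn φ, substA φ α ∈ Sent
  asn1_mem : ∀ φ ∈ Form1, ∀ x : M, asn1 φ x ∈ Asn φ
  asn2_mem : ∀ φ ∈ Form2, ∀ x y : M, asn2 φ x y ∈ Asn φ
  asim_refl : ∀ φ ∈ Form, ∀ α ∈ Asn φ, ASim φ α φ α
  fsim_refl : ∀ φ ∈ Form, FSim φ φ

/-- Compatibility of the internal syntax along an embedding `h : M → M'`. -/
structure CodingCompat (h : M → M') (c : Coding M) (c' : Coding M') : Prop where
  form : ∀ x : M, x ∈ c.Form ↔ h x ∈ c'.Form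
  form1 : ∀ x : M, x ∈ c.Form1 ↔ h x ∈ c'.Form1
  form2 : ∀ x : M, x ∈ c.Form2 ↔ h x ∈ c'.Form2
  sent : ∀ x : M, x ∈ c.Sent ↔ h x ∈ c'.Sent
  term : ∀ x : M, x ∈ c.Term ↔ h x ∈ c'.Term
  clterm : ∀ x : M, x ∈ c.ClTerm ↔ h x ∈ c'.ClTerm
  var : ∀ x : M, x ∈ c.Var ↔ h x ∈ c'.Var
  cltermseq : ∀ x : M, x ∈ c.ClTermSeq ↔ h x ∈ c'.ClTermSeq
  tval : ∀ t ∈ c.ClTerm, h (c.tval t) = c'.tval (h t)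
  seqValEq : ∀ q ∈ c.ClTermSeq, ∀ r ∈ c.ClTermSeq,
    (c.SeqValEq q r ↔ c'.SeqValEq (h q) (h r))
  num : ∀ x : M, h (c.num x) = c'.num (h x)
  eqC : ∀ t ∈ c.Term, ∀ u ∈ c.Term, h (c.eqC t u) = c'.eqC (h t) (h u)
  negC : ∀ φ ∈ c.Form, h (c.negC φ) = c'.negC (h φ)
  andC : ∀ φ ∈ c.Form, ∀ ψ ∈ c.Form, h (c.andC φ ψ) = c'.andC (h φ) (h ψ)
  orC : ∀ φ ∈ c.Form, ∀ ψ ∈ c.Form, h (c.orC φ ψ) = c'.orC (h φ) (h ψ)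
  exC : ∀ v ∈ c.Var, ∀ φ ∈ c.Form, h (c.exC v φ) = c'.exC (h v) (h φ)
  allC : ∀ v ∈ c.Var, ∀ φ ∈ c.Form, h (c.allC v φ) = c'.allC (h v) (h φ)
  exCl : ∀ φ ∈ c.Form1, h (c.exCl φ) = c'.exCl (h φ)
  subst1 : ∀ φ ∈ c.Form1, ∀ t ∈ c.ClTerm, h (c.subst1 φ t) = c'.subst1 (h φ) (h t)
  subst2 : ∀ φ ∈ c.Form2, ∀ t ∈ c.ClTerm, ∀ u ∈ c.ClTerm,
    h (c.subst2 φ t u) = c'.subst2 (h φ) (h t) (h u)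
  substSeq : ∀ φ ∈ c.Form, ∀ q ∈ c.ClTermSeq, h (c.substSeq φ q) = c'.substSeq (h φ) (h q)
  depth : ∀ φ ∈ c.Form, h (c.depth φ) = c'.depth (h φ)
  asn : ∀ φ ∈ c.Form, ∀ α : M, (α ∈ c.Asn φ ↔ h α ∈ c'.Asn (h φ))
  emptyA : h c.emptyA = c'.emptyA
  asn1 : ∀ φ ∈ c.Form1, ∀ x : M, h (c.asn1 φ x) = c'.asn1 (h φ) (h x)
  asn2 : ∀ φ ∈ c.Form2, ∀ x y : M, h (c.asn2 φ x y) = c'.asn2 (h φ) (h x) (h y)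
  asnMod : ∀ v ∈ c.Var, ∀ α β : M, (c.AsnMod v α β ↔ c'.AsnMod (h v) (h α) (h β))
  substA : ∀ φ ∈ c.Form, ∀ α ∈ c.Asn φ, h (c.substA φ α) = c'.substA (h φ) (h α)
  tvalA : ∀ t ∈ c.Term, ∀ α : M, h (c.tvalA t α) = c'.tvalA (h t) (h α)
  asim : ∀ φ ∈ c.Form, ∀ ψ ∈ c.Form, ∀ α β : M,
    (c.ASim φ α ψ β ↔ c'.ASim (h φ) (h α) (h ψ) (h β))
  fsim : ∀ φ ∈ c.Form, ∀ ψ ∈ c.Form, (c.FSim φ ψ ↔ c'.FSim (h φ) (h ψ))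
  dirsub : ∀ φ ∈ c.Form, ∀ ψ ∈ c.Form, (c.DirSub ψ φ ↔ c'.DirSub (h ψ) (h φ))

/-! ### The theory `CT⁻` and its extensions -/

/-- `(M, T)` is a model of `CT⁻` : `M ⊨ PA` together with Tarski's compositional
clauses and the regularity axiom for the truth predicate `T`. -/
structure CTminus (s : PAStruct M) (c : Coding M) (T : Set M) : Prop where
  pa : IsPAModel s
  t_sent : T ⊆ c.Sent
  t_eq : ∀ t ∈ c.ClTerm, ∀ u ∈ c.ClTerm, (c.eqC t u ∈ T ↔ c.tval t = c.tval u)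
  t_neg : ∀ φ ∈ c.Sent, (c.negC φ ∈ T ↔ φ ∉ T)
  t_and : ∀ φ ∈ c.Sent, ∀ ψ ∈ c.Sent, (c.andC φ ψ ∈ T ↔ (φ ∈ T ∧ ψ ∈ T))
  t_ex : ∀ φ ∈ c.Form1, (c.exCl φ ∈ T ↔ ∃ x : M, c.subst1 φ (c.num x) ∈ T)
  t_reg : ∀ φ ∈ c.Form, ∀ q ∈ c.ClTermSeq, ∀ r ∈ c.ClTermSeq,
    c.SeqValEq q r → (c.substSeq φ q ∈ T ↔ c.substSeq φ r ∈ T)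

/-- The internal induction axiom `INT`. -/
def INT (s : PAStruct M) (c : Coding M) (T : Set M) : Prop :=
  ∀ φ ∈ c.Form1,
    c.subst1 φ (c.num s.zero) ∈ T →
    (∀ x : M, c.subst1 φ (c.num x) ∈ T → c.subst1 φ (c.num (s.succ x)) ∈ T) →
    ∀ x : M, c.subst1 φ (c.num x) ∈ T

/-- The internal collection axiom `IntColl`. -/
def IntColl (s : PAStruct M) (c : Coding M) (T : Set M) : Prop :=
  ∀ φ ∈ c.Form2, ∀ a : M,
    (∀ x : M, ltR s x a → ∃ y : M, c.subst2 φ (c.num x) (c.num y) ∈ T) →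
    ∃ b : M, ∀ x : M, ltR s x a →
      ∃ y : M, ltR s y b ∧ c.subst2 φ (c.num x) (c.num y) ∈ T

/-- Syntactic regularity of a truth class: syntactically similar sentences get
the same truth value. -/
def SynRegT (c : Coding M) (T : Set M) : Prop :=
  ∀ φ ∈ c.Sent, ∀ ψ ∈ c.Sent, c.ASim φ c.emptyA ψ c.emptyA → (φ ∈ T ↔ ψ ∈ T)

/-! ### Satisfaction classes -/

/-- `S` is compositional at `φ` (Tarski's clauses at `φ`). -/
def CompAt (c : Coding M) (S : Set (M × M)) (φ : M) : Prop :=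
  ∀ α ∈ c.Asn φ,
    ((φ, α) ∈ S ↔
      ((∃ t ∈ c.Term, ∃ u ∈ c.Term, φ = c.eqC t u ∧ c.tvalA t α = c.tvalA u α) ∨
       (∃ ψ ∈ c.Form, φ = c.negC ψ ∧ (ψ, α) ∉ S) ∨
       (∃ ψ ∈ c.Form, ∃ η ∈ c.Form, φ = c.orC ψ η ∧ ((ψ, α) ∈ S ∨ (η, α) ∈ S)) ∨
       (∃ ψ ∈ c.Form, ∃ η ∈ c.Form, φ = c.andC ψ η ∧ (ψ, α) ∈ S ∧ (η, α) ∈ S) ∨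
       (∃ ψ ∈ c.Form, ∃ v ∈ c.Var, φ = c.exC v ψ ∧
         ∃ β ∈ c.Asn ψ, c.AsnMod v α β ∧ (ψ, β) ∈ S) ∨
       (∃ ψ ∈ c.Form, ∃ v ∈ c.Var, φ = c.allC v ψ ∧
         ∀ β ∈ c.Asn ψ, c.AsnMod v α β → (ψ, β) ∈ S)))

/-- `S` is a satisfaction class with admissible domain `D`. -/
def IsSatClassWith (c : Coding M) (S : Set (M × M)) (D : Set M) : Prop :=
  D ⊆ c.Form ∧
  (∀ φ ∈ D, ∀ ψ ∈ c.Form, c.DirSub ψ φ → ψ ∈ D) ∧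
  (∀ φ ∈ D, CompAt c S φ) ∧
  (∀ φ ∈ D, ∀ α ∈ c.Asn φ, Xor' ((φ, α) ∈ S) ((c.negC φ, α) ∈ S)) ∧
  (∀ φ ∈ c.Form, (∃ α : M, (φ, α) ∈ S ∨ (c.negC φ, α) ∈ S) → φ ∈ D)

/-- `S` is a satisfaction class. -/
def IsSatClass (c : Coding M) (S : Set (M × M)) : Prop :=
  ∃ D : Set M, IsSatClassWith c S D

/-- The domain of a satisfaction class: the maximal admissible domain. -/
def satDom (c : Coding M) (S : Set (M × M)) : Set M :=
  ⋃₀ {D : Set M | IsSatClassWith c S D}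

/-- `S` is a full satisfaction class. -/
def IsFullSatClass (c : Coding M) (S : Set (M × M)) : Prop :=
  IsSatClassWith c S c.Form

/-- Syntactic regularity of a satisfaction class. -/
def SynRegS (c : Coding M) (S : Set (M × M)) : Prop :=
  ∀ φ ∈ c.Form, ∀ ψ ∈ c.Form, ∀ α ∈ c.Asn φ, ∀ β ∈ c.Asn ψ,
    c.ASim φ α ψ β → ((φ, α) ∈ S ↔ (ψ, β) ∈ S)

/-- The internal induction axiom for a satisfaction class. -/
def IntIndS (s : PAStruct M) (c : Coding M) (S : Set (M × M)) : Prop :=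
  ∀ φ ∈ c.Form1, φ ∈ satDom c S →
    (φ, c.asn1 φ s.zero) ∈ S →
    (∀ x : M, (φ, c.asn1 φ x) ∈ S → (φ, c.asn1 φ (s.succ x)) ∈ S) →
    ∀ x : M, (φ, c.asn1 φ x) ∈ S

/-- The internal collection axiom for a satisfaction class. -/
def IntCollS (s : PAStruct M) (c : Coding M) (S : Set (M × M)) : Prop :=
  ∀ φ ∈ c.Form2, ∀ a : M,
    (∀ x : M, ltR s x a → ∃ y : M, (φ, c.asn2 φ x y) ∈ S) →
    ∃ b : M, ∀ x : M, ltR s x a →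
      ∃ y : M, ltR s y b ∧ (φ, c.asn2 φ x y) ∈ S

/-! ### General structures with a linear order (for the Compression Lemma) -/

/-- Formulas over a language with a linear order `≤`, equality and relation
symbols indexed by `I` (of arbitrary arities, via lists of variables). -/
inductive OFormula (I : Type) : Type
  | le : ℕ → ℕ → OFormula I
  | eq : ℕ → ℕ → OFormula I
  | rel : I → List ℕ → OFormula I
  | not : OFormula I → OFormula I
  | and : OFormula I → OFormula I → OFormula I
  | or : OFormula I → OFormula I → OFormula I
  | ex : ℕ → OFormula I → OFormula I
  | all : ℕ → OFormula I → OFormula I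

def OSat {I : Type} (le : M → M → Prop) (R : I → List M → Prop) :
    (ℕ → M) → OFormula I → Prop
  | ν, .le u v => le (ν u) (ν v)
  | ν, .eq u v => ν u = ν v
  | ν, .rel i l => R i (l.map ν)
  | ν, .not φ => ¬ OSat le R ν φ
  | ν, .and φ ψ => OSat le R ν φ ∧ OSat le R ν ψ
  | ν, .or φ ψ => OSat le R ν φ ∨ OSat le R ν ψ
  | ν, .ex v φ => ∃ x : M, OSat le R (Function.update ν v x) φ
  | ν, .all v φ => ∀ x : M, OSat le R (Function.update ν v x) φ

def oLt (le : M → M → Prop) (x y : M) : Prop := le x y ∧ x ≠ y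

/-- The full collection scheme for such a structure. -/
def OColl {I : Type} (le : M → M → Prop) (R : I → List M → Prop) : Prop :=
  ∀ (φ : OFormula I) (ν : ℕ → M) (a : M),
    (∀ x : M, oLt le x a →
      ∃ y : M, OSat le R (Function.update (Function.update ν 0 x) 1 y) φ) →
    ∃ b : M, ∀ x : M, oLt le x a →
      ∃ y : M, oLt le y b ∧ OSat le R (Function.update (Function.update ν 0 x) 1 y) φ

/-!
If the lemma failed, every `x < a` would have a bound `z` beyond which `φ(x, ·)` fails.
"`φ(x, ·)` fails beyond `z`" is first-order, so collection puts all these bounds below a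
single `b`; but some `φ(x, y)` with `x < a` holds for a `y > b`, beyond the bound for `x`.
-/

def fvO {I : Type} : OFormula I → Finset ℕ
  | .le u v => {u, v}
  | .eq u v => {u, v}
  | .rel _ l => l.toFinset
  | .not φ => fvO φ
  | .and φ ψ => fvO φ ∪ fvO ψ
  | .or φ ψ => fvO φ ∪ fvO ψ
  | .ex v φ => (fvO φ).erase v
  | .all v φ => (fvO φ).erase v

lemma update_apply_eq_of_forall_mem_erase {ν ν' : ℕ → M} {s : Finset ℕ} {v : ℕ}
    (h : ∀ n ∈ s.erase v, ν n = ν' n) (x : M) :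
    ∀ n ∈ s, Function.update ν v x n = Function.update ν' v x n := by
  intro n hn
  by_cases hnv : n = v
  · simp [hnv]
  · simpa [hnv] using h n (Finset.mem_erase.2 ⟨hnv, hn⟩)

section Satisfaction

variable {I : Type} {le : M → M → Prop} {R : I → List M → Prop}

lemma oSat_congr (φ : OFormula I) {ν ν' : ℕ → M} (h : ∀ n ∈ fvO φ, ν n = ν' n) :
    OSat le R ν φ ↔ OSat le R ν' φ := by
  induction φ generalizing ν ν' with
  | le u v | eq u v => simp only [OSat, h u (by simp [fvO]), h v (by simp [fvO])]
  | rel i l =>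
    simp only [OSat, List.map_congr_left fun n hn => h n (by simpa [fvO] using hn)]
  | not φ ih => exact (ih h).not
  | and φ ψ ihφ ihψ =>
    exact and_congr (ihφ fun n hn => h n (by simp [fvO, hn]))
      (ihψ fun n hn => h n (by simp [fvO, hn]))
  | or φ ψ ihφ ihψ =>
    exact or_congr (ihφ fun n hn => h n (by simp [fvO, hn]))
      (ihψ fun n hn => h n (by simp [fvO, hn]))
  | ex v φ ih =>
    exact exists_congr fun x => ih (update_apply_eq_of_forall_mem_erase h x)
  | all v φ ih =>
    exact forall_congr' fun x => ih (update_apply_eq_of_forall_mem_erase h x)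

lemma oSat_update_of_notMem {φ : OFormula I} {v : ℕ} (hv : v ∉ fvO φ) (ν : ℕ → M) (x : M) :
    OSat le R (Function.update ν v x) φ ↔ OSat le R ν φ :=
  oSat_congr φ fun _ hn => Function.update_of_ne (ne_of_mem_of_not_mem hn hv) x ν

/-- With `v` fresh, `φ.failsAbove v` is `∃ v, v = y ∧ ∀ y, ¬ (v < y ∧ φ)`, where `y` is
variable `1`: the old value of `y` is saved in `v` before `y` is requantified. -/
def OFormula.failsAbove (φ : OFormula I) (v : ℕ) : OFormula I :=
  .ex v (.and (.eq v 1) (.all 1 (.not (.and (.and (.le v 1) (.not (.eq v 1))) φ))))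

lemma oSat_failsAbove {φ : OFormula I} {v : ℕ} (hv1 : v ≠ 1) (hv : v ∉ fvO φ) (ν : ℕ → M) :
    OSat le R ν (φ.failsAbove v) ↔
      ∀ y, oLt le (ν 1) y → ¬ OSat le R (Function.update ν 1 y) φ := by
  simp only [OFormula.failsAbove, OSat, Function.update_self, Function.update_of_ne hv1,
    Function.update_of_ne hv1.symm, Function.update_comm hv1, oSat_update_of_notMem hv,
    exists_eq_left, oLt, not_and, ne_eq]

end Satisfaction

lemma oLt_trans {le : M → M → Prop} (htrans : ∀ x y z : M, le x y → le y z → le x z)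
    (hantisymm : ∀ x y : M, le x y → le y x → x = y) {x y z : M}
    (hxy : oLt le x y) (hyz : oLt le y z) : oLt le x z :=
  ⟨htrans x y z hxy.1 hyz.1, fun hxz => hyz.2 (hantisymm y z hyz.1 (hxz ▸ hxy.1))⟩

theorem compression_lemma_general
    (M : Type) (le : M → M → Prop) (I : Type) (R : I → List M → Prop)
    (htrans : ∀ x y z : M, le x y → le y z → le x z)
    (hantisymm : ∀ x y : M, le x y → le y x → x = y)
    (hcoll : OColl le R)
    (φ : OFormula I) (ν : ℕ → M) (a : M)
    (harb : ∀ z : M, ∃ y : M, oLt le z y ∧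
      ∃ x : M, oLt le x a ∧ OSat le R (Function.update (Function.update ν 0 x) 1 y) φ) :
    ∃ x₀ : M, oLt le x₀ a ∧ ∀ z : M, ∃ y : M, oLt le z y ∧
      OSat le R (Function.update (Function.update ν 0 x₀) 1 y) φ := by
  by_contra! hbounded
  obtain ⟨v, hv⟩ := Infinite.exists_notMem_finset (insert 1 (fvO φ))
  rw [Finset.mem_insert, not_or] at hv
  have hfails (x z : M) := oSat_failsAbove (le := le) (R := R) hv.1 hv.2
    (Function.update (Function.update ν 0 x) 1 z)
  simp only [Function.update_self, Function.update_idem] at hfails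
  obtain ⟨b, hb⟩ := hcoll (φ.failsAbove v) ν a fun x hx =>
    (hbounded x hx).imp fun z hz => (hfails x z).2 hz
  obtain ⟨y, hby, x, hxa, hφ⟩ := harb b
  obtain ⟨z, hzb, hz⟩ := hb x hxa
  exact (hfails x z).1 hz y (oLt_trans htrans hantisymm hzb hby) hφ

/-- **Compression Lemma.** Let `M` be a structure in a language
with a linear order `≤` without a largest element, satisfying the full collection
scheme.  If, for a binary formula `φ(x,y)` (with parameters) and `a ∈ M`, there
are arbitrarily large `y` such that `φ(x,y)` holds for some `x < a`, then there
is a single `x₀ < a` such that `φ(x₀,y)` holds for arbitrarily large `y`. -/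
theorem compression_lemma
    (M : Type) (le : M → M → Prop) (I : Type) (R : I → List M → Prop)
    (hrefl : ∀ x : M, le x x)
    (htrans : ∀ x y z : M, le x y → le y z → le x z)
    (hantisymm : ∀ x y : M, le x y → le y x → x = y)
    (htotal : ∀ x y : M, le x y ∨ le y x)
    (hnotop : ∀ x : M, ∃ y : M, oLt le x y)
    (hcoll : OColl le R)
    (φ : OFormula I) (ν : ℕ → M) (a : M)
    (harb : ∀ z : M, ∃ y : M, oLt le z y ∧
      ∃ x : M, oLt le x a ∧ OSat le R (Function.update (Function.update ν 0 x) 1 y) φ) :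
    ∃ x₀ : M, oLt le x₀ a ∧ ∀ z : M, ∃ y : M, oLt le z y ∧
      OSat le R (Function.update (Function.update ν 0 x₀) 1 y) φ :=
  compression_lemma_general M le I R htrans hantisymm hcoll φ ν a harb

end CTPaper
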